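/- Odd companion to Warnaar's transformation: for all natural numbers L and integers a, Σ_{k≥0} O_{L,k}(q) [2k+1 choose k-a]_q = q^(2a²+2a) [2L choose L-2a-1]_q, where O_{L,k}(q) = Σ_{m=0}^{L} q^((m+k)(m+k+1)+k(k+1)) [L choose m]_q [L-m choose 2k+1]_q. -/

import Mathlib

open LaurentPolynomial Finset

noncomputable section

/-- Gaussian binomial coefficient with natural indices, in base `x`, defined by the
`q`-Pascal recurrence `[n+1, k+1] = [n, k] + x^(k+1) * [n, k+1]`.  It vanishes for `k > n`. -/
def gaussAux (x : LaurentPolynomial ℤ) : ℕ → ℕ → LaurentPolynomial ℤ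
  | _, 0 => 1
  | 0, _ + 1 => 0
  | n + 1, k + 1 => gaussAux x n k + x ^ (k + 1) * gaussAux x n (k + 1)

/-- The Gaussian binomial coefficient `[n choose k]` in base `x`, for integer indices:
it is zero when `n < 0` or `k < 0` (and, by `gaussAux`, also when `k > n`). -/
def qbin (x : LaurentPolynomial ℤ) (n k : ℤ) : LaurentPolynomial ℤ :=
  if 0 ≤ n ∧ 0 ≤ k then gaussAux x n.toNat k.toNat else 0

/-- `(-1)^j` for an integer `j`, as a Laurent polynomial. -/
def m1 (j : ℤ) : LaurentPolynomial ℤ := ((((-1 : ℤˣ) ^ j : ℤˣ) : ℤ) : LaurentPolynomial ℤ)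

/-! Applying `[n, r] [r, s] = [n, s] [n - s, r - s]` twice and putting `s = m + k - a`, the
summand indexed by `(m, k)` becomes
`q^(2a²+2a) q^(s(s+2a+1)) [L, s] · q^((s-m)(s+2a+1-m)) [s, m] [L-s, s+2a+1-m]`.
The `q`-Vandermonde identity sums this over `m` to `q^(2a²+2a) q^(s(s+2a+1)) [L, s] [L, s+2a+1]`,
and a second application of it, after the reflection `s ↦ L - 2a - 1 - s` and the symmetry
`[L, j] = [L, L - j]`, sums that over `s` to `q^(2a²+2a) [2L, L-2a-1]`.
All sums run over `ℤ` as `finsum`s: shifting and reflecting the index is then a bijection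
of `ℤ`, and the range restrictions come for free from the vanishing of out-of-range binomials. -/

section GeneralBase

variable (x : LaurentPolynomial ℤ)

theorem gaussAux_zero_right (n : ℕ) : gaussAux x n 0 = 1 := by
  cases n <;> rfl

theorem gaussAux_succ_succ (n k : ℕ) :
    gaussAux x (n + 1) (k + 1) = gaussAux x n k + x ^ (k + 1) * gaussAux x n (k + 1) := rfl

theorem gaussAux_of_lt {n k : ℕ} (h : n < k) : gaussAux x n k = 0 := by
  induction n generalizing k with
  | zero => obtain ⟨k, rfl⟩ := Nat.exists_eq_add_one.mpr h; rfl
  | succ n ih =>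
    obtain ⟨k, rfl⟩ := Nat.exists_eq_add_one.mpr (Nat.zero_lt_of_lt h)
    rw [gaussAux_succ_succ, ih (by omega), ih (by omega), mul_zero, add_zero]

theorem gaussAux_self (n : ℕ) : gaussAux x n n = 1 := by
  induction n with
  | zero => rfl
  | succ n ih => rw [gaussAux_succ_succ, ih, gaussAux_of_lt x n.lt_succ_self, mul_zero, add_zero]

theorem qbin_natCast (n k : ℕ) : qbin x n k = gaussAux x n k := by
  simp [qbin]

theorem qbin_eq_zero_of_lt_or_lt {n k : ℤ} (h : k < 0 ∨ n < k) : qbin x n k = 0 := by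
  unfold qbin
  split_ifs
  · exact gaussAux_of_lt x (by omega)
  · rfl

theorem bounds_of_qbin_ne_zero {n k : ℤ} (h : qbin x n k ≠ 0) : 0 ≤ k ∧ k ≤ n := by
  by_contra hk
  exact h (qbin_eq_zero_of_lt_or_lt x (by omega))

end GeneralBase

def qint (n : ℕ) : LaurentPolynomial ℤ := ∑ i ∈ range n, T (i : ℤ)

def qfact (n : ℕ) : LaurentPolynomial ℤ := ∏ i ∈ range n, qint (i + 1)

theorem qint_add (m n : ℕ) : qint (m + n) = qint m + T (m : ℤ) * qint n := by
  simp only [qint, sum_range_add, mul_sum, ← T_add, Nat.cast_add]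

theorem qint_ne_zero {n : ℕ} (hn : n ≠ 0) : qint n ≠ 0 := fun h => hn <| by
  simpa [qint, eval₂_T] using congrArg (eval₂ (RingHom.id ℤ) 1) h

theorem qfact_ne_zero (n : ℕ) : qfact n ≠ 0 :=
  prod_ne_zero_iff.mpr fun i _ => qint_ne_zero i.succ_ne_zero

theorem qfact_succ (n : ℕ) : qfact (n + 1) = qfact n * qint (n + 1) :=
  prod_range_succ _ _

theorem T_one_pow (n : ℕ) : (T 1 : LaurentPolynomial ℤ) ^ n = T n := by
  rw [T_pow, mul_one]

theorem gaussAux_add_mul_qfact (n k : ℕ) :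
    gaussAux (T 1) (n + k) k * (qfact k * qfact n) = qfact (n + k) := by
  induction k generalizing n with
  | zero => simp [gaussAux_zero_right, qfact]
  | succ k ihk =>
    induction n with
    | zero => simp [gaussAux_self, qfact]
    | succ n ihn =>
      have pascal : gaussAux (T 1) (n + 1 + (k + 1)) (k + 1) =
          gaussAux (T 1) (n + (k + 1)) k +
            T (k + 1 : ℕ) * gaussAux (T 1) (n + (k + 1)) (k + 1) := by
        rw [show n + 1 + (k + 1) = n + (k + 1) + 1 by omega, gaussAux_succ_succ, T_one_pow]
      have ihk' := ihk (n + 1)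
      rw [show n + 1 + k = n + (k + 1) by omega] at ihk'
      have split := qint_add (k + 1) (n + 1)
      rw [show k + 1 + (n + 1) = n + (k + 1) + 1 by omega] at split
      rw [pascal, show n + 1 + (k + 1) = n + (k + 1) + 1 by omega, qfact_succ (n + (k + 1))]
      simp only [qfact_succ k, qfact_succ n] at ihk' ihn ⊢
      linear_combination qint (k + 1) * ihk' + T (k + 1 : ℕ) * qint (n + 1) * ihn
        - qfact (n + (k + 1)) * split

theorem gaussAux_add_symm (n k : ℕ) : gaussAux (T 1) (n + k) k = gaussAux (T 1) (n + k) n := by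
  apply mul_right_cancel₀ (mul_ne_zero (qfact_ne_zero k) (qfact_ne_zero n))
  rw [gaussAux_add_mul_qfact, add_comm n k, mul_comm (qfact k), gaussAux_add_mul_qfact]

theorem gaussAux_mul_gaussAux (j b c : ℕ) :
    gaussAux (T 1) (c + b + j) (b + j) * gaussAux (T 1) (b + j) j =
      gaussAux (T 1) (c + b + j) j * gaussAux (T 1) (c + b) b := by
  apply mul_right_cancel₀
    (mul_ne_zero (mul_ne_zero (qfact_ne_zero j) (qfact_ne_zero b)) (qfact_ne_zero c))
  have h1 := gaussAux_add_mul_qfact b j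
  have h2 := gaussAux_add_mul_qfact c (b + j)
  have h3 := gaussAux_add_mul_qfact c b
  have h4 := gaussAux_add_mul_qfact (c + b) j
  rw [← add_assoc] at h2
  linear_combination gaussAux (T 1) (c + b + j) (b + j) * qfact c * h1 + h2
    - gaussAux (T 1) (c + b + j) j * qfact j * h3 - h4

theorem qbin_succ {n : ℤ} (hn : 0 ≤ n) (k : ℤ) :
    qbin (T 1) (n + 1) k = qbin (T 1) n (k - 1) + T k * qbin (T 1) n k := by
  lift n to ℕ using hn
  rcases lt_trichotomy k 0 with hk | rfl | hk
  · simp only [qbin_eq_zero_of_lt_or_lt _ (Or.inl hk),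
      qbin_eq_zero_of_lt_or_lt _ (Or.inl (by omega : k - 1 < 0)), mul_zero, add_zero]
  · rw [qbin_eq_zero_of_lt_or_lt _ (Or.inl (by omega : (0 : ℤ) - 1 < 0)), T_zero, zero_add,
      one_mul, ← Nat.cast_succ, ← Nat.cast_zero, qbin_natCast, qbin_natCast,
      gaussAux_zero_right, gaussAux_zero_right]
  · obtain ⟨k, rfl⟩ : ∃ j : ℕ, k = j + 1 := ⟨(k - 1).toNat, by omega⟩
    rw [add_sub_cancel_right, ← Nat.cast_succ, ← Nat.cast_succ, qbin_natCast, qbin_natCast,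
      qbin_natCast, gaussAux_succ_succ, T_one_pow]

theorem qbin_symm (n k : ℤ) : qbin (T 1) n k = qbin (T 1) n (n - k) := by
  by_cases hk : 0 ≤ k ∧ k ≤ n
  · obtain ⟨k, rfl⟩ := Int.eq_ofNat_of_zero_le hk.1
    obtain ⟨j, rfl⟩ : ∃ j : ℕ, n = j + k := ⟨(n - k).toNat, by omega⟩
    rw [add_sub_cancel_right, ← Nat.cast_add, qbin_natCast, qbin_natCast, gaussAux_add_symm]
  · rw [qbin_eq_zero_of_lt_or_lt _ (by omega), qbin_eq_zero_of_lt_or_lt _ (by omega)]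

theorem qbin_mul_qbin (n r s : ℤ) :
    qbin (T 1) n r * qbin (T 1) r s = qbin (T 1) n s * qbin (T 1) (n - s) (r - s) := by
  by_cases h : 0 ≤ s ∧ s ≤ r ∧ r ≤ n
  · obtain ⟨j, rfl⟩ := Int.eq_ofNat_of_zero_le h.1
    obtain ⟨b, rfl⟩ : ∃ b : ℕ, r = b + j := ⟨(r - j).toNat, by omega⟩
    obtain ⟨c, rfl⟩ : ∃ c : ℕ, n = c + b + j := ⟨(n - b - j).toNat, by omega⟩
    rw [add_sub_cancel_right, add_sub_cancel_right]
    simp only [← Nat.cast_add, qbin_natCast, gaussAux_mul_gaussAux]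
  · rcases not_and_or.mp h with hs | hsrn
    · rw [qbin_eq_zero_of_lt_or_lt _ (Or.inl (by omega : s < 0)),
        qbin_eq_zero_of_lt_or_lt _ (Or.inl (by omega : s < 0))]
      ring
    rcases not_and_or.mp hsrn with hsr | hrn
    · rw [qbin_eq_zero_of_lt_or_lt _ (Or.inr (by omega : r < s)),
        qbin_eq_zero_of_lt_or_lt _ (Or.inl (by omega : r - s < 0))]
      ring
    · rw [qbin_eq_zero_of_lt_or_lt _ (Or.inr (by omega : n < r)),
        qbin_eq_zero_of_lt_or_lt _ (Or.inr (by omega : n - s < r - s))]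
      ring

def vandermondeTerm (x y r m : ℤ) : LaurentPolynomial ℤ :=
  T ((x - m) * (r - m)) * qbin (T 1) x m * qbin (T 1) y (r - m)

theorem qbin_add_eq_finsum {x y : ℤ} (hx : 0 ≤ x) (hy : 0 ≤ y) (r : ℤ) :
    qbin (T 1) (x + y) r = ∑ᶠ m, vandermondeTerm x y r m := by
  unfold vandermondeTerm
  induction x, hx using Int.leInduction generalizing r with
  | base =>
    rw [finsum_eq_single _ 0 fun m hm => by rw [qbin_eq_zero_of_lt_or_lt _ (by omega)]; ring,
      ← Nat.cast_zero, qbin_natCast, gaussAux_zero_right]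
    simp
  | succ x hx ih =>
    set A : ℤ → LaurentPolynomial ℤ :=
      fun m => T ((x + 1 - m) * (r - m)) * qbin (T 1) x (m - 1) * qbin (T 1) y (r - m)
    set B : ℤ → LaurentPolynomial ℤ :=
      fun m => T r * (T ((x - m) * (r - m)) * qbin (T 1) x m * qbin (T 1) y (r - m))
    have hA : A.HasFiniteSupport := (Set.finite_Icc 1 (x + 1)).subset fun m hm =>
      have := bounds_of_qbin_ne_zero _ (right_ne_zero_of_mul (left_ne_zero_of_mul hm))
      ⟨by omega, by omega⟩
    have hB : B.HasFiniteSupport := (Set.finite_Icc 0 x).subset fun m hm =>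
      bounds_of_qbin_ne_zero _
        (right_ne_zero_of_mul (left_ne_zero_of_mul (right_ne_zero_of_mul hm)))
    -- Pascal's rule in `x` splits each summand in two; after the shift `m ↦ m + 1` in the first
    -- part, the two parts are the induction hypothesis at `r - 1` and at `r`.
    calc qbin (T 1) (x + 1 + y) r = qbin (T 1) (x + y) (r - 1) + T r * qbin (T 1) (x + y) r := by
          rw [add_right_comm]; exact qbin_succ (by omega) r
      _ = ∑ᶠ m, A m + ∑ᶠ m, B m := by
          rw [ih, ih, mul_finsum, ← finsum_comp_equiv (Equiv.subRight 1)]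
          congr 1
          exact finsum_congr fun m => by simp only [A, Equiv.subRight_apply]; ring_nf
      _ = ∑ᶠ m, (A m + B m) := (finsum_add_distrib hA hB).symm
      _ = _ := finsum_congr fun m => by
          have hT : (T ((x + 1 - m) * (r - m)) : LaurentPolynomial ℤ) * T m =
              T r * T ((x - m) * (r - m)) := by rw [← T_add, ← T_add]; ring_nf
          rw [qbin_succ hx m]
          linear_combination -qbin (T 1) x m * qbin (T 1) y (r - m) * hT

theorem finsum_comm_of_subset {α β M : Type*} [AddCommMonoid M] {f : α → β → M}
    (s : Finset α) (t : Finset β) (h : ∀ a b, f a b ≠ 0 → a ∈ s ∧ b ∈ t) :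
    ∑ᶠ a, ∑ᶠ b, f a b = ∑ᶠ b, ∑ᶠ a, f a b := by
  have inner_left : ∀ a, ∑ᶠ b, f a b = ∑ b ∈ t, f a b := fun a =>
    finsum_eq_sum_of_support_subset _ fun b hb => (h a b hb).2
  have inner_right : ∀ b, ∑ᶠ a, f a b = ∑ a ∈ s, f a b := fun b =>
    finsum_eq_sum_of_support_subset _ fun a ha => (h a b ha).1
  have outer_left : ∑ᶠ a, ∑ b ∈ t, f a b = ∑ a ∈ s, ∑ b ∈ t, f a b :=
    finsum_eq_sum_of_support_subset _ fun a ha =>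
      have ⟨b, _, hb⟩ := exists_ne_zero_of_sum_ne_zero ha
      (h a b hb).1
  have outer_right : ∑ᶠ b, ∑ a ∈ s, f a b = ∑ b ∈ t, ∑ a ∈ s, f a b :=
    finsum_eq_sum_of_support_subset _ fun b hb =>
      have ⟨a, _, ha⟩ := exists_ne_zero_of_sum_ne_zero hb
      (h a b ha).2
  rw [finsum_congr inner_left, finsum_congr inner_right, outer_left, outer_right, sum_comm]

theorem finsum_natCast_eq_finsum {M : Type*} [AddCommMonoid M] {f : ℤ → M}
    (hf : ∀ k < 0, f k = 0) : ∑ᶠ n : ℕ, f n = ∑ᶠ k : ℤ, f k := by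
  rw [← finsum_mem_range (f := f) (Nat.cast_injective (R := ℤ)), ← finsum_mem_univ f]
  refine finsum_mem_inter_support_eq _ _ _ (Set.ext fun k => ?_)
  simp only [Set.mem_inter_iff, Set.mem_range, Function.mem_support, Set.mem_univ, true_and]
  exact ⟨And.right, fun hk =>
    ⟨⟨k.toNat, Int.toNat_of_nonneg (not_lt.mp (hk ∘ hf k))⟩, hk⟩⟩

theorem qbin_two_mul_eq_finsum {L : ℤ} (hL : 0 ≤ L) (b : ℤ) :
    qbin (T 1) (2 * L) (L - b) =
      ∑ᶠ s, T (s * (s + b)) * (qbin (T 1) L s * qbin (T 1) L (s + b)) := by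
  rw [two_mul, qbin_add_eq_finsum hL hL, ← finsum_comp_equiv (Equiv.subLeft (L - b))]
  refine finsum_congr fun s => ?_
  rw [vandermondeTerm, Equiv.subLeft_apply, qbin_symm L (L - b - s)]
  ring_nf

def oddTerm (L a m k : ℤ) : LaurentPolynomial ℤ :=
  T ((m + k) * (m + k + 1) + k * (k + 1)) * qbin (T 1) L m * qbin (T 1) (L - m) (2 * k + 1) *
    qbin (T 1) (2 * k + 1) (k - a)

theorem mem_Icc_of_oddTerm_ne_zero {L a m k : ℤ} (h : oddTerm L a m k ≠ 0) :
    m ∈ Icc 0 L ∧ k ∈ Icc 0 L := by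
  simp only [oddTerm, mul_ne_zero_iff] at h
  have hm := bounds_of_qbin_ne_zero _ h.1.1.2
  have hk := bounds_of_qbin_ne_zero _ h.1.2
  simp only [mem_Icc]
  omega

def shiftedTerm (L a s m : ℤ) : LaurentPolynomial ℤ :=
  T (2 * a ^ 2 + 2 * a) *
    (T (s * (s + (2 * a + 1))) * qbin (T 1) L s * vandermondeTerm s (L - s) (s + (2 * a + 1)) m)

theorem oddTerm_eq_shiftedTerm (L a m s : ℤ) :
    oddTerm L a m (s + a - m) = shiftedTerm L a s m := by
  have inner := qbin_mul_qbin (L - m) (2 * (s + a - m) + 1) (s - m)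
  rw [show L - m - (s - m) = L - s by ring,
    show 2 * (s + a - m) + 1 - (s - m) = s + (2 * a + 1) - m by ring] at inner
  have outer := qbin_mul_qbin L s m
  have hT : (T ((m + (s + a - m)) * (m + (s + a - m) + 1) + (s + a - m) * (s + a - m + 1)) :
      LaurentPolynomial ℤ) = T (2 * a ^ 2 + 2 * a) * T (s * (s + (2 * a + 1))) *
        T ((s - m) * (s + (2 * a + 1) - m)) := by
    rw [← T_add, ← T_add]; ring_nf
  rw [oddTerm, shiftedTerm, vandermondeTerm, show s + a - m - a = s - m by ring, hT]
  linear_combination T (2 * a ^ 2 + 2 * a) * T (s * (s + (2 * a + 1))) *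
      T ((s - m) * (s + (2 * a + 1) - m)) *
      (qbin (T 1) L m * inner - qbin (T 1) (L - s) (s + (2 * a + 1) - m) * outer)

theorem mem_Icc_of_shiftedTerm_ne_zero {L a s m : ℤ} (h : shiftedTerm L a s m ≠ 0) :
    s ∈ Icc 0 L ∧ m ∈ Icc 0 L := by
  simp only [shiftedTerm, vandermondeTerm, mul_ne_zero_iff] at h
  have hs := bounds_of_qbin_ne_zero _ h.2.1.2
  have hm := bounds_of_qbin_ne_zero _ h.2.2.1.2
  simp only [mem_Icc]
  omega

theorem finsum_shiftedTerm (L a s : ℤ) :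
    ∑ᶠ m, shiftedTerm L a s m = T (2 * a ^ 2 + 2 * a) *
      (T (s * (s + (2 * a + 1))) * (qbin (T 1) L s * qbin (T 1) L (s + (2 * a + 1)))) := by
  unfold shiftedTerm
  rw [← mul_finsum, ← mul_finsum, mul_assoc (T (s * _))]
  by_cases hs : 0 ≤ s ∧ s ≤ L
  · rw [← qbin_add_eq_finsum hs.1 (by omega), add_sub_cancel]
  · rw [qbin_eq_zero_of_lt_or_lt _ (by omega), zero_mul, zero_mul]

theorem finsum_sum_range_eq_finsum_oddTerm (L : ℕ) (a : ℤ) :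
    (∑ᶠ k : ℕ,
        (∑ m ∈ Finset.range (L + 1),
            T (((m : ℤ) + k) * ((m : ℤ) + k + 1) + (k : ℤ) * ((k : ℤ) + 1)) *
              qbin (T 1) L m * qbin (T 1) ((L : ℤ) - m) (2 * k + 1)) *
          qbin (T 1) (2 * (k : ℤ) + 1) ((k : ℤ) - a)) =
      ∑ᶠ k : ℤ, ∑ᶠ m : ℤ, oddTerm L a m k := by
  have vanish : ∀ m k : ℤ, m < 0 ∨ k < 0 → oddTerm L a m k = 0 := fun m k h => by
    by_contra hne
    have := mem_Icc_of_oddTerm_ne_zero hne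
    simp only [mem_Icc] at this
    omega
  rw [← finsum_natCast_eq_finsum fun k hk =>
    finsum_eq_zero_of_forall_eq_zero fun m => vanish m k (Or.inr hk)]
  refine finsum_congr fun k => ?_
  rw [← finsum_natCast_eq_finsum fun m hm => vanish m k (Or.inl hm), sum_mul,
    finsum_eq_sum_of_support_subset (s := range (L + 1))]
  · rfl
  · intro m hm
    have := (mem_Icc_of_oddTerm_ne_zero hm).1
    simp only [mem_Icc, coe_range, Set.mem_Iio] at this ⊢
    omega

theorem stmt18 (L : ℕ) (a : ℤ) :
    (∑ᶠ k : ℕ,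
        (∑ m ∈ Finset.range (L + 1),
            T (((m : ℤ) + k) * ((m : ℤ) + k + 1) + (k : ℤ) * ((k : ℤ) + 1)) *
              qbin (T 1) L m * qbin (T 1) ((L : ℤ) - m) (2 * k + 1)) *
          qbin (T 1) (2 * (k : ℤ) + 1) ((k : ℤ) - a)) =
      T (2 * a ^ 2 + 2 * a) * qbin (T 1) (2 * L) ((L : ℤ) - 2 * a - 1) := by
  calc _ = ∑ᶠ k : ℤ, ∑ᶠ m : ℤ, oddTerm L a m k := finsum_sum_range_eq_finsum_oddTerm L a
    _ = ∑ᶠ m : ℤ, ∑ᶠ k : ℤ, oddTerm L a m k :=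
        finsum_comm_of_subset (Icc 0 L) (Icc 0 L) fun _ _ h => (mem_Icc_of_oddTerm_ne_zero h).symm
    _ = ∑ᶠ m : ℤ, ∑ᶠ s : ℤ, shiftedTerm L a s m := finsum_congr fun m => by
        rw [← finsum_comp_equiv (Equiv.addRight (a - m))]
        simp only [Equiv.coe_addRight, ← add_sub_assoc, oddTerm_eq_shiftedTerm]
    _ = ∑ᶠ s : ℤ, ∑ᶠ m : ℤ, shiftedTerm L a s m :=
        finsum_comm_of_subset (Icc 0 L) (Icc 0 L) fun _ _ h =>
          (mem_Icc_of_shiftedTerm_ne_zero h).symm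
    _ = _ := by
        rw [finsum_congr (finsum_shiftedTerm L a), ← mul_finsum, sub_sub,
          ← qbin_two_mul_eq_finsum L.cast_nonneg]
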